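/- arXiv:2412.01088 — 3 statements merged into one kernel-verified Lean document; each statement's English description precedes it below -/
import Mathlib

section
/- If P is a complex polynomial of degree at most n, m ≤ n, and M = max_{|z|=1} |P(z)|, then for all z with |z| ≥ 1, |P^{(m)}(z)| ≤ (n!/(n−m)!)·|z|^{n−m}·M, i.e. the modulus of the m-th derivative of P at z is bounded by the modulus of the m-th derivative of z^n at z times M. -/
open Polynomial

/-! Suppose the bound fails at some `z` with `1 ≤ ‖z‖`. Then `P^{(m)}(z) = c · (X^n)^{(m)}(z)` for
some `c` with `M < ‖c‖`. Applying the maximum modulus principle to the reflected polynomial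
`w^n P(1/w)` gives `‖P(w)‖ ≤ M ‖w‖^n < ‖c w^n‖` for `1 ≤ ‖w‖`, so every zero of `P - c X^n` lies in
the open unit disc. By Gauss–Lucas so does every zero of its `m`-th derivative, which however
vanishes at `z`. -/

namespace Polynomial

theorem rootSet_derivative_subset_of_convex {S : Set ℂ} (hS : Convex ℝ S) {f : ℂ[X]}
    (hf : f.rootSet ℂ ⊆ S) : (derivative f).rootSet ℂ ⊆ S := by
  rcases le_or_gt f.degree 0 with hdeg | hdeg
  · simp [derivative_of_natDegree_zero (natDegree_eq_zero_iff_degree_le_zero.2 hdeg)]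
  · exact (rootSet_derivative_subset_convexHull_rootSet hdeg).trans (hS.convexHull_subset_iff.2 hf)

theorem rootSet_iterate_derivative_subset_of_convex {S : Set ℂ} (hS : Convex ℝ S) {f : ℂ[X]}
    (hf : f.rootSet ℂ ⊆ S) (k : ℕ) : (derivative^[k] f).rootSet ℂ ⊆ S := by
  induction k with
  | zero => exact hf
  | succ k ih =>
    rw [Function.iterate_succ_apply']
    exact rootSet_derivative_subset_of_convex hS ih

section BoundedOnCircle

variable {n : ℕ} {P : ℂ[X]} (hP : P.natDegree ≤ n) {M : ℝ}
  (hM : ∀ w ∈ Metric.sphere (0 : ℂ) 1, ‖P.eval w‖ ≤ M)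
include hP hM

theorem norm_eval_reflect_le {u : ℂ} (hu : ‖u‖ ≤ 1) : ‖(reflect n P).eval u‖ ≤ M := by
  refine Complex.norm_le_of_forall_mem_frontier_norm_le (f := fun x => (reflect n P).eval x)
    Metric.isBounded_ball (Polynomial.differentiable _).diffContOnCl (fun x hx => ?_)
    (by rwa [closure_ball (0 : ℂ) one_ne_zero, mem_closedBall_zero_iff])
  rw [frontier_ball (0 : ℂ) one_ne_zero, mem_sphere_zero_iff_norm] at hx
  have hx0 : x⁻¹ ≠ 0 := inv_ne_zero (norm_ne_zero_iff.1 (by rw [hx]; exact one_ne_zero))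
  let := invertibleOfNonzero hx0
  have h := eval₂_reflect_mul_pow (RingHom.id ℂ) x⁻¹ n P hP
  rw [invOf_eq_inv, inv_inv, eval₂_id, eval₂_id] at h
  have h' := congrArg norm h
  rw [norm_mul, norm_pow, norm_inv, hx, inv_one, one_pow, mul_one] at h'
  exact h' ▸ hM x⁻¹ (by simp [hx])

theorem norm_coeff_le_of_norm_eval_le_on_sphere : ‖P.coeff n‖ ≤ M := by
  simpa [← coeff_zero_eq_eval_zero, coeff_reflect] using
    norm_eval_reflect_le hP hM (u := 0) (by simp)

theorem norm_eval_le_mul_norm_pow {w : ℂ} (hw : 1 ≤ ‖w‖) : ‖P.eval w‖ ≤ M * ‖w‖ ^ n := by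
  have hw0 : w ≠ 0 := norm_pos_iff.1 (one_pos.trans_le hw)
  let := invertibleOfNonzero hw0
  have h := eval₂_reflect_mul_pow (RingHom.id ℂ) w n P hP
  rw [invOf_eq_inv, eval₂_id, eval₂_id] at h
  rw [← h, norm_mul, norm_pow]
  gcongr
  exact norm_eval_reflect_le hP hM (by rw [norm_inv]; exact inv_le_one_of_one_le₀ hw)

theorem rootSet_sub_C_mul_X_pow_subset_ball {c : ℂ} (hc : M < ‖c‖) :
    (P - C c * X ^ n).rootSet ℂ ⊆ Metric.ball 0 1 := by
  intro w hw
  rw [mem_rootSet, coe_aeval_eq_eval, eval_sub, eval_mul, eval_C, eval_pow, eval_X,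
    sub_eq_zero] at hw
  rw [mem_ball_zero_iff]
  by_contra! hw1
  have hwn : 0 < ‖w‖ ^ n := pow_pos (one_pos.trans_le hw1) n
  have := norm_eval_le_mul_norm_pow hP hM hw1
  rw [hw.2, norm_mul, norm_pow] at this
  exact (mul_lt_mul_of_pos_right hc hwn).not_ge this

theorem norm_eval_iterate_derivative_le {m : ℕ} (hm : m ≤ n) {z : ℂ} (hz : 1 ≤ ‖z‖) :
    ‖(derivative^[m] P).eval z‖ ≤ n.descFactorial m * ‖z‖ ^ (n - m) * M := by
  by_contra! hlt
  have hD : (n.descFactorial m : ℂ) ≠ 0 := mod_cast (Nat.descFactorial_pos.2 hm).ne'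
  have hz0 : z ≠ 0 := norm_pos_iff.1 (one_pos.trans_le hz)
  have hdenom : (n.descFactorial m : ℂ) * z ^ (n - m) ≠ 0 := mul_ne_zero hD (pow_ne_zero _ hz0)
  set c := (derivative^[m] P).eval z / (n.descFactorial m * z ^ (n - m))
  have hc : M < ‖c‖ := by
    rw [norm_div, lt_div_iff₀ (norm_pos_iff.2 hdenom), norm_mul, norm_pow, Complex.norm_natCast]
    linarith
  set f := P - C c * X ^ n
  have hf : f.coeff n ≠ 0 := by
    rw [coeff_sub, coeff_C_mul_X_pow, if_pos rfl, sub_ne_zero]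
    exact fun h => (norm_coeff_le_of_norm_eval_le_on_sphere hP hM).not_gt (h ▸ hc)
  have hfm : derivative^[m] f = derivative^[m] P - C (c * n.descFactorial m) * X ^ (n - m) := by
    rw [iterate_derivative_sub, iterate_derivative_C_mul, iterate_derivative_X_pow_eq_C_mul,
      ← mul_assoc, ← C_mul]
  -- `rootSet 0 = ∅`, so `z` is a root only once `f^{(m)} ≠ 0`, i.e. `f` has degree exactly `n`.
  have hfm0 : derivative^[m] f ≠ 0 := fun h => by
    have := congrArg (coeff · (n - m)) h
    simp only [coeff_iterate_derivative, Nat.sub_add_cancel hm, coeff_zero, nsmul_eq_mul] at this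
    exact mul_ne_zero hD hf this
  have hroot : z ∈ (derivative^[m] f).rootSet ℂ := by
    refine mem_rootSet.2 ⟨hfm0, ?_⟩
    rw [coe_aeval_eq_eval, hfm]
    simp only [eval_sub, eval_mul, eval_C, eval_pow, eval_X, c]
    field_simp
    ring
  have := rootSet_iterate_derivative_subset_of_convex (convex_ball 0 1)
    (rootSet_sub_C_mul_X_pow_subset_ball hP hM hc) m hroot
  exact (mem_ball_zero_iff.1 this).not_ge hz

end BoundedOnCircle

end Polynomial

theorem bernstein_mth_derivative
    (n m : ℕ) (hm : m ≤ n)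
    (P : Polynomial ℂ) (hP : P.degree ≤ (n : ℕ))
    (M : ℝ) (hM : IsGreatest ((fun z => ‖P.eval z‖) '' Metric.sphere (0 : ℂ) 1) M) :
    ∀ z : ℂ, 1 ≤ ‖z‖ →
      ‖(Polynomial.derivative^[m] P).eval z‖ ≤
        (n.factorial : ℝ) / ((n - m).factorial : ℝ) * ‖z‖ ^ (n - m) * M := by
  intro z hz
  have hfac : (n.factorial : ℝ) / (n - m).factorial = n.descFactorial m := by
    rw [div_eq_iff (by positivity), ← Nat.factorial_mul_descFactorial hm]
    push_cast
    ring
  rw [hfac]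
  exact norm_eval_iterate_derivative_le (natDegree_le_iff_degree_le.2 hP)
    (fun w hw => hM.2 ⟨w, hw, rfl⟩) hm hz
end

section
/- If P is a complex polynomial of degree at most n with P(z) ≠ 0 for every z with |z| < 1, and M = max_{|z|=1} |P(z)|, then |P(z)| ≤ (1/2)·(|z|^n + 1)·M for all z with |z| ≥ 1. -/
/-!
Ankeny–Rivlin via the Erdős–Lax inequality. For `P(ζ) ≠ 0`,
`Re (ζ P'(ζ) / P(ζ)) = ∑ Re (ζ / (ζ - a))` over the roots `a`, and `Re (ζ / (ζ - a)) - 1/2` has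
the sign of `|ζ|² - |a|²`. Hence on the unit circle `|P'| ≤ |nP - ζP'|` if `P` has no root in the
open disc, and `|nP - ζP'| ≤ |P'|` if `P` has degree `n` and all roots in it
(`|nP(ζ) - ζP'(ζ)|` is `|Q'(ζ)|` for the reciprocal polynomial `Q(z) = zⁿ conj (P (1 / conj z))`).
If `|P| ≤ M` on the circle and `|μ| > M`, the maximum principle puts all roots of `P - μzⁿ` in
the open disc; letting `nμζⁿ⁻¹` range over `|ν| > nM` gives `|P'| + |nP - ζP'| ≤ nM`, so
`|P'| ≤ nM/2` on the circle when `P` has no zeros in the disc. The maximum principle for `P'`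
extends this to `|P'(w)| ≤ (nM/2)|w|ⁿ⁻¹` for `|w| ≥ 1`, and integrating along the ray from
`z/|z|` to `z` gives `|P(z)| ≤ M + (M/2)(|z|ⁿ - 1)`.
-/

open Polynomial Complex

namespace Complex

theorem re_div_sub_sub_half {w a : ℂ} (h : w ≠ a) :
    (w / (w - a)).re - 1 / 2 = (‖w‖ ^ 2 - ‖a‖ ^ 2) / (2 * ‖w - a‖ ^ 2) := by
  have hn : normSq (w - a) ≠ 0 := normSq_pos.2 (sub_ne_zero.2 h) |>.ne'
  rw [div_re, ← add_div, Complex.sq_norm, Complex.sq_norm, Complex.sq_norm, div_sub' hn,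
    div_eq_div_iff hn (by positivity)]
  simp only [normSq_apply, sub_re, sub_im]
  ring

theorem norm_ofReal_sub_le_norm {r : ℝ} {q : ℂ} (hr : 0 ≤ r) (h : r / 2 ≤ q.re) :
    ‖(r : ℂ) - q‖ ≤ ‖q‖ := by
  rw [norm_def, norm_def]
  apply Real.sqrt_le_sqrt
  simp only [normSq_apply, sub_re, sub_im, ofReal_re, ofReal_im]
  nlinarith

theorem norm_le_norm_ofReal_sub {r : ℝ} {q : ℂ} (hr : 0 ≤ r) (h : q.re ≤ r / 2) :
    ‖q‖ ≤ ‖(r : ℂ) - q‖ := by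
  rw [norm_def, norm_def]
  apply Real.sqrt_le_sqrt
  simp only [normSq_apply, sub_re, sub_im, ofReal_re, ofReal_im]
  nlinarith

theorem norm_add_norm_le_of_forall_lt_norm {d e : ℂ} {R : ℝ}
    (h : ∀ ν : ℂ, R < ‖ν‖ → d ≠ ν ∧ ‖e‖ ≤ ‖d - ν‖) : ‖d‖ + ‖e‖ ≤ R := by
  have hd : ‖d‖ ≤ R := not_lt.1 fun hR => (h d hR).1 rfl
  refine le_of_forall_gt_imp_ge_of_dense fun t ht => ?_
  set u := exp (arg d * I)
  have hu : ‖u‖ = 1 := norm_exp_ofReal_mul_I _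
  have ht0 : 0 ≤ t := (norm_nonneg d).trans (hd.trans ht.le)
  have key := (h (t * u) (by simpa [hu, abs_of_nonneg ht0])).2
  rw [← norm_mul_exp_arg_mul_I d, ← sub_mul, norm_mul, hu, mul_one, ← ofReal_sub, norm_real,
    Real.norm_eq_abs, abs_sub_comm, abs_of_nonneg (by linarith)] at key
  linarith

theorem norm_le_of_norm_deriv_le {f : ℂ → ℂ} (hf : Differentiable ℂ f) {B B' : ℝ → ℝ}
    (hB : ∀ t, HasDerivAt B (B' t) t) (h1 : ∀ ζ : ℂ, ‖ζ‖ = 1 → ‖f ζ‖ ≤ B 1)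
    (h' : ∀ w : ℂ, 1 ≤ ‖w‖ → ‖deriv f w‖ ≤ B' ‖w‖) {z : ℂ} (hz : 1 ≤ ‖z‖) :
    ‖f z‖ ≤ B ‖z‖ := by
  have hz0 : (‖z‖ : ℂ) ≠ 0 := by exact_mod_cast (one_pos.trans_le hz).ne'
  set u := z / ‖z‖
  have hu : ‖u‖ = 1 := by simp [u, div_self (ofReal_ne_zero.1 hz0)]
  have hderiv (t : ℝ) : HasDerivAt (fun s : ℝ => f (s * u)) (deriv f (t * u) * u) t := by
    simpa using (((hf _).hasDerivAt).comp (t : ℂ) ((hasDerivAt_id (t : ℂ)).mul_const u)).comp_ofReal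
  have hnorm {t : ℝ} (ht : 1 ≤ t) : ‖(t : ℂ) * u‖ = t := by
    rw [norm_mul, hu, mul_one, norm_real, Real.norm_of_nonneg (by linarith)]
  have := image_norm_le_of_norm_deriv_right_le_deriv_boundary (a := 1) (b := ‖z‖)
    (fun t _ => (hderiv t).continuousAt.continuousWithinAt) (fun t _ => (hderiv t).hasDerivWithinAt)
    (by simpa using h1 u hu) hB (fun t ht => ?_) ⟨hz, le_rfl⟩
  · rwa [mul_div_cancel₀ z hz0] at this
  · have h := h' _ (ht.1.trans (hnorm ht.1).ge)
    rwa [hnorm ht.1, ← mul_one ‖deriv f _‖, ← hu, ← norm_mul] at h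

end Complex

namespace Polynomial

section MaximumModulus

variable {W : ℂ[X]} {n : ℕ} {K : ℝ}

theorem eval_reflect_inv_mul_pow (hW : W.natDegree ≤ n) {v : ℂ} (hv : v ≠ 0) :
    (reflect n W).eval v⁻¹ * v ^ n = W.eval v := by
  let := invertibleOfNonzero hv
  exact eval₂_reflect_mul_pow (RingHom.id ℂ) v n W hW

theorem norm_eval_reflect_le_s6 (hW : W.natDegree ≤ n) (hK : ∀ ζ : ℂ, ‖ζ‖ = 1 → ‖W.eval ζ‖ ≤ K)
    {v : ℂ} (hv : ‖v‖ ≤ 1) : ‖(reflect n W).eval v‖ ≤ K := by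
  refine Complex.norm_le_of_forall_mem_frontier_norm_le Metric.isBounded_ball
    (reflect n W).differentiable.diffContOnCl (fun ζ hζ => ?_)
    (by rwa [closure_ball (0 : ℂ) one_ne_zero, mem_closedBall_zero_iff])
  rw [frontier_ball (0 : ℂ) one_ne_zero, mem_sphere_zero_iff_norm] at hζ
  have hζ0 : ζ ≠ 0 := norm_ne_zero_iff.1 (by simp [hζ])
  have := eval_reflect_inv_mul_pow hW (inv_ne_zero hζ0)
  rw [inv_inv] at this
  simpa [← this, hζ] using hK ζ⁻¹ (by simp [hζ])

theorem norm_eval_le_mul_pow (hW : W.natDegree ≤ n) (hK : ∀ ζ : ℂ, ‖ζ‖ = 1 → ‖W.eval ζ‖ ≤ K)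
    {w : ℂ} (hw : 1 ≤ ‖w‖) : ‖W.eval w‖ ≤ K * ‖w‖ ^ n := by
  have hw0 : w ≠ 0 := norm_pos_iff.1 (one_pos.trans_le hw)
  rw [← eval_reflect_inv_mul_pow hW hw0, norm_mul, norm_pow]
  have := norm_eval_reflect_le_s6 hW hK (v := w⁻¹) (by simpa using inv_le_one_of_one_le₀ hw)
  gcongr

theorem norm_coeff_le (hW : W.natDegree ≤ n) (hK : ∀ ζ : ℂ, ‖ζ‖ = 1 → ‖W.eval ζ‖ ≤ K) :
    ‖W.coeff n‖ ≤ K := by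
  simpa [← coeff_zero_eq_eval_zero, coeff_reflect] using
    norm_eval_reflect_le_s6 hW hK (v := 0) (by simp)

end MaximumModulus

theorem re_mul_derivative_div_eq_sum (P : ℂ[X]) {w : ℂ} (hw : P.eval w ≠ 0) :
    (w * P.derivative.eval w / P.eval w).re = (P.roots.map fun a => (w / (w - a)).re).sum := by
  rw [mul_div_assoc, (IsAlgClosed.splits P).eval_derivative_div_eval_of_ne_zero hw,
    ← Multiset.sum_map_mul_left, ← coe_reAddGroupHom, map_multiset_sum, Multiset.map_map]
  simp [div_eq_mul_inv]

theorem half_natDegree_le_re_mul_derivative_div {P : ℂ[X]} {w : ℂ} (hw : P.eval w ≠ 0)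
    (h : ∀ a ∈ P.roots, ‖a‖ ≤ ‖w‖) :
    (P.natDegree : ℝ) / 2 ≤ (w * P.derivative.eval w / P.eval w).re := by
  rw [re_mul_derivative_div_eq_sum P hw, ← IsAlgClosed.card_roots_eq_natDegree,
    div_eq_mul_one_div, ← nsmul_eq_mul, ← Multiset.card_map (fun a => (w / (w - a)).re)]
  refine Multiset.card_nsmul_le_sum fun x hx => ?_
  obtain ⟨a, ha, rfl⟩ := Multiset.mem_map.1 hx
  have hwa : w ≠ a := by rintro rfl; exact hw ((mem_roots'.1 ha).2)
  have : ‖a‖ ^ 2 ≤ ‖w‖ ^ 2 := by gcongr; exact h a ha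
  have : 0 ≤ (‖w‖ ^ 2 - ‖a‖ ^ 2) / (2 * ‖w - a‖ ^ 2) := by
    apply div_nonneg <;> [linarith; positivity]
  linarith [re_div_sub_sub_half hwa]

theorem re_mul_derivative_div_le_half_natDegree {P : ℂ[X]} {w : ℂ} (hw : P.eval w ≠ 0)
    (h : ∀ a ∈ P.roots, ‖w‖ ≤ ‖a‖) :
    (w * P.derivative.eval w / P.eval w).re ≤ (P.natDegree : ℝ) / 2 := by
  rw [re_mul_derivative_div_eq_sum P hw, ← IsAlgClosed.card_roots_eq_natDegree,
    div_eq_mul_one_div, ← nsmul_eq_mul, ← Multiset.card_map (fun a => (w / (w - a)).re)]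
  refine Multiset.sum_le_card_nsmul _ _ fun x hx => ?_
  obtain ⟨a, ha, rfl⟩ := Multiset.mem_map.1 hx
  have hwa : w ≠ a := by rintro rfl; exact hw ((mem_roots'.1 ha).2)
  have : ‖w‖ ^ 2 ≤ ‖a‖ ^ 2 := by gcongr; exact h a ha
  have : (‖w‖ ^ 2 - ‖a‖ ^ 2) / (2 * ‖w - a‖ ^ 2) ≤ 0 :=
    div_nonpos_of_nonpos_of_nonneg (by linarith) (by positivity)
  linarith [re_div_sub_sub_half hwa]

theorem norm_derivative_le_norm_sub_of_one_le_norm_roots {P : ℂ[X]} {n : ℕ} (hP : P.natDegree ≤ n)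
    (h : ∀ a ∈ P.roots, 1 ≤ ‖a‖) {ζ : ℂ} (hζ : ‖ζ‖ = 1) :
    ‖P.derivative.eval ζ‖ ≤ ‖n * P.eval ζ - ζ * P.derivative.eval ζ‖ := by
  by_cases hPζ : P.eval ζ = 0
  · simp [hPζ, hζ]
  set q := ζ * P.derivative.eval ζ / P.eval ζ
  have hq : q.re ≤ (n : ℝ) / 2 :=
    (re_mul_derivative_div_le_half_natDegree hPζ (by simpa [hζ] using h)).trans (by gcongr)
  have hmul : ζ * P.derivative.eval ζ = q * P.eval ζ := (div_mul_cancel₀ _ hPζ).symm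
  calc ‖P.derivative.eval ζ‖ = ‖q‖ * ‖P.eval ζ‖ := by rw [← norm_mul, ← hmul, norm_mul, hζ, one_mul]
    _ ≤ ‖((n : ℝ) : ℂ) - q‖ * ‖P.eval ζ‖ := by
      gcongr; exact norm_le_norm_ofReal_sub n.cast_nonneg hq
    _ = ‖n * P.eval ζ - ζ * P.derivative.eval ζ‖ := by rw [← norm_mul, hmul]; push_cast; ring_nf

theorem norm_sub_le_norm_derivative_of_norm_roots_lt_one {G : ℂ[X]} (hG : G ≠ 0)
    (h : ∀ a ∈ G.roots, ‖a‖ < 1) {ζ : ℂ} (hζ : ‖ζ‖ = 1) :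
    ‖G.natDegree * G.eval ζ - ζ * G.derivative.eval ζ‖ ≤ ‖G.derivative.eval ζ‖ := by
  have hGζ : G.eval ζ ≠ 0 := fun h0 => (h ζ ((mem_roots hG).2 h0)).ne hζ
  set q := ζ * G.derivative.eval ζ / G.eval ζ
  have hq : (G.natDegree : ℝ) / 2 ≤ q.re :=
    half_natDegree_le_re_mul_derivative_div hGζ fun a ha => hζ ▸ (h a ha).le
  have hmul : ζ * G.derivative.eval ζ = q * G.eval ζ := (div_mul_cancel₀ _ hGζ).symm
  calc ‖G.natDegree * G.eval ζ - ζ * G.derivative.eval ζ‖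
      = ‖((G.natDegree : ℝ) : ℂ) - q‖ * ‖G.eval ζ‖ := by rw [← norm_mul, hmul]; push_cast; ring_nf
    _ ≤ ‖q‖ * ‖G.eval ζ‖ := by gcongr; exact norm_ofReal_sub_le_norm (Nat.cast_nonneg _) hq
    _ = ‖G.derivative.eval ζ‖ := by rw [← norm_mul, ← hmul, norm_mul, hζ, one_mul]

theorem eval_derivative_ne_zero_of_norm_roots_lt_one {G : ℂ[X]} (hG : 0 < G.degree)
    (h : ∀ a ∈ G.roots, ‖a‖ < 1) {ζ : ℂ} (hζ : 1 ≤ ‖ζ‖) : G.derivative.eval ζ ≠ 0 := by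
  intro h0
  have hsub : G.rootSet ℂ ⊆ Metric.ball 0 1 := fun a ha => by
    rw [mem_rootSet, coe_aeval_eq_eval] at ha
    simpa using h a ((mem_roots ha.1).2 ha.2)
  have hG' : G.derivative ≠ 0 := by
    rw [Ne, derivative_eq_zero, ← Ne, ← pos_iff_ne_zero]
    exact natDegree_pos_iff_degree_pos.2 hG
  have hmem : ζ ∈ G.derivative.rootSet ℂ := by
    rw [mem_rootSet, coe_aeval_eq_eval]
    exact ⟨hG', h0⟩
  have := convexHull_min hsub (convex_ball 0 1)
    (rootSet_derivative_subset_convexHull_rootSet hG hmem)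
  rw [mem_ball_zero_iff] at this
  linarith

section SubtractMonomial

variable {W : ℂ[X]} {n : ℕ} {K : ℝ} {μ : ℂ}

theorem natDegree_sub_C_mul_X_pow_eq (hW : W.natDegree ≤ n)
    (hK : ∀ ζ : ℂ, ‖ζ‖ = 1 → ‖W.eval ζ‖ ≤ K) (hμ : K < ‖μ‖) :
    (W - C μ * X ^ n).natDegree = n := by
  refine natDegree_eq_of_le_of_coeff_ne_zero
    ((natDegree_sub_le _ _).trans (max_le hW (natDegree_C_mul_X_pow_le μ n))) ?_
  rw [coeff_sub, coeff_C_mul_X_pow, if_pos rfl, sub_ne_zero]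
  rintro h
  exact (norm_coeff_le hW hK).not_gt (h ▸ hμ)

theorem norm_lt_one_of_mem_roots_sub_C_mul_X_pow (hW : W.natDegree ≤ n)
    (hK : ∀ ζ : ℂ, ‖ζ‖ = 1 → ‖W.eval ζ‖ ≤ K) (hμ : K < ‖μ‖) {a : ℂ}
    (ha : a ∈ (W - C μ * X ^ n).roots) : ‖a‖ < 1 := by
  by_contra! h1
  have hWa : W.eval a = μ * a ^ n := by
    simpa [sub_eq_zero] using (mem_roots'.1 ha).2
  have := norm_eval_le_mul_pow hW hK h1
  rw [hWa, norm_mul, norm_pow] at this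
  have : 0 < ‖a‖ ^ n := by positivity
  nlinarith

end SubtractMonomial

theorem norm_derivative_add_norm_sub_le {W : ℂ[X]} {n : ℕ} {K : ℝ} (hn : n ≠ 0)
    (hW : W.natDegree ≤ n) (hK : ∀ ζ : ℂ, ‖ζ‖ = 1 → ‖W.eval ζ‖ ≤ K) {ζ : ℂ} (hζ : ‖ζ‖ = 1) :
    ‖W.derivative.eval ζ‖ + ‖n * W.eval ζ - ζ * W.derivative.eval ζ‖ ≤ n * K := by
  refine norm_add_norm_le_of_forall_lt_norm fun ν hν => ?_
  have hζ0 : ζ ≠ 0 := norm_ne_zero_iff.1 (by simp [hζ])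
  have hc : (n : ℂ) * ζ ^ (n - 1) ≠ 0 := mul_ne_zero (Nat.cast_ne_zero.2 hn) (pow_ne_zero _ hζ0)
  set μ := ν / (n * ζ ^ (n - 1))
  have hμ : K < ‖μ‖ := by
    rw [norm_div, norm_mul, norm_pow, hζ, one_pow, mul_one, Complex.norm_natCast,
      lt_div_iff₀ (by positivity)]
    linarith
  have hμν : μ * (n * ζ ^ (n - 1)) = ν := div_mul_cancel₀ ν hc
  clear_value μ
  set G := W - C μ * X ^ n
  have hG : G.natDegree = n := natDegree_sub_C_mul_X_pow_eq hW hK hμ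
  have hroots : ∀ a ∈ G.roots, ‖a‖ < 1 := fun a => norm_lt_one_of_mem_roots_sub_C_mul_X_pow hW hK hμ
  have hG' : G.derivative.eval ζ = W.derivative.eval ζ - ν := by
    simp [G, derivative_X_pow, ← hμν]
  have hGsub : n * G.eval ζ - ζ * G.derivative.eval ζ = n * W.eval ζ - ζ * W.derivative.eval ζ := by
    simp only [hG', ← hμν, G, eval_sub, eval_mul, eval_C, eval_pow, eval_X]
    linear_combination (n : ℂ) * μ * mul_pow_sub_one hn ζ
  have hGpos : 0 < G.natDegree := hG ▸ Nat.pos_of_ne_zero hn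
  refine ⟨fun h => eval_derivative_ne_zero_of_norm_roots_lt_one
    (natDegree_pos_iff_degree_pos.1 hGpos) hroots hζ.ge (by rw [hG', h, sub_self]), ?_⟩
  have := norm_sub_le_norm_derivative_of_norm_roots_lt_one (ne_zero_of_natDegree_gt hGpos) hroots hζ
  rwa [hG, hGsub, hG'] at this

theorem norm_derivative_le_of_eval_ne_zero {P : ℂ[X]} {n : ℕ} {M : ℝ} (hP : P.natDegree ≤ n)
    (hP0 : ∀ z : ℂ, ‖z‖ < 1 → P.eval z ≠ 0) (hM : ∀ ζ : ℂ, ‖ζ‖ = 1 → ‖P.eval ζ‖ ≤ M) {ζ : ℂ}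
    (hζ : ‖ζ‖ = 1) : ‖P.derivative.eval ζ‖ ≤ n * M / 2 := by
  rcases eq_or_ne n 0 with rfl | hn
  · simp [derivative_of_natDegree_zero (Nat.le_zero.1 hP)]
  have hroots : ∀ a ∈ P.roots, 1 ≤ ‖a‖ := fun a ha =>
    not_lt.1 fun h => hP0 a h (isRoot_of_mem_roots ha)
  linarith [norm_derivative_le_norm_sub_of_one_le_norm_roots hP hroots hζ,
    norm_derivative_add_norm_sub_le hn hP hM hζ]

end Polynomial

theorem growth_nonvanishing
    (n : ℕ) (P : Polynomial ℂ) (hP : P.degree ≤ (n : ℕ))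
    (hP0 : ∀ z : ℂ, ‖z‖ < 1 → P.eval z ≠ 0)
    (M : ℝ) (hM : IsGreatest ((fun z => ‖P.eval z‖) '' Metric.sphere (0 : ℂ) 1) M) :
    ∀ z : ℂ, 1 ≤ ‖z‖ →
      ‖P.eval z‖ ≤ (1 / 2) * (‖z‖ ^ n + 1) * M := by
  intro z hz
  have hM' : ∀ ζ : ℂ, ‖ζ‖ = 1 → ‖P.eval ζ‖ ≤ M := fun ζ hζ =>
    hM.2 ⟨ζ, mem_sphere_zero_iff_norm.2 hζ, rfl⟩
  have hdeg : P.natDegree ≤ n := natDegree_le_iff_degree_le.2 hP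
  have hderiv (w : ℂ) (hw : 1 ≤ ‖w‖) :
      ‖deriv (fun x => P.eval x) w‖ ≤ n * M / 2 * ‖w‖ ^ (n - 1) := by
    rw [Polynomial.deriv]
    exact norm_eval_le_mul_pow ((natDegree_derivative_le P).trans (Nat.sub_le_sub_right hdeg 1))
      (fun ζ hζ => norm_derivative_le_of_eval_ne_zero hdeg hP0 hM' hζ) hw
  refine Complex.norm_le_of_norm_deriv_le P.differentiable (B := fun t => 1 / 2 * (t ^ n + 1) * M)
    (B' := fun t => n * M / 2 * t ^ (n - 1)) (fun t => ?_) (fun ζ hζ => ?_) hderiv hz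
  · exact ((((hasDerivAt_pow n t).add_const 1).const_mul (1 / 2)).mul_const M).congr_deriv (by ring)
  · norm_num [hM' ζ hζ]
end

section
/- Let P be a complex polynomial of exact degree n ≥ 1 with P(z) ≠ 0 for every z with |z| < 1, and let P* be the polynomial defined by P*(z) = z^n · conj(P(1/conj(z))), i.e. if P(z) = Σ_{k=0}^{n} a_k z^k then P*(z) = Σ_{k=0}^{n} conj(a_{n−k}) z^k. Then for every complex number γ with |γ| > 1, every zero of the polynomial P(z) − γ·P*(z) lies in the closed disk |z| ≤ 1. -/
/-!
All roots `r` of `P` satisfy `‖r‖ ≥ 1`, and for `‖z‖ ≥ 1` the identity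
`‖1 - conj z * r‖² - ‖z - r‖² = (‖z‖² - 1)(‖r‖² - 1)` gives `‖z - r‖ ≤ ‖z‖ ‖(conj z)⁻¹ - r‖`.
Multiplying over the roots yields `‖P(z)‖ ≤ ‖z‖ⁿ ‖P((conj z)⁻¹)‖ = ‖P*(z)‖` on `‖z‖ ≥ 1`.
At a zero `z` of `P - γ P*` with `‖z‖ > 1` this contradicts `‖P(z)‖ = ‖γ‖ ‖P*(z)‖`,
since `P*(z) ≠ 0` because `(conj z)⁻¹` lies in the open unit disc.
-/

open Polynomial Finset

/-- The conjugate-reciprocal polynomial `P*(z) = z^n conj(P(1/conj z))`,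
i.e. `P*(z) = ∑_{k=0}^{n} conj(a_{n-k}) z^k` when `P(z) = ∑_{k=0}^{n} a_k z^k`. -/
noncomputable def conjReflect (n : ℕ) (P : Polynomial ℂ) : Polynomial ℂ :=
  ∑ k ∈ Finset.range (n + 1),
    Polynomial.C ((starRingEnd ℂ) (P.coeff (n - k))) * Polynomial.X ^ k

open ComplexConjugate

lemma conjReflect_eq_reflect_map {n : ℕ} {P : ℂ[X]} (hP : P.natDegree ≤ n) :
    conjReflect n P = reflect n (P.map (starRingEnd ℂ)) := by
  ext k
  simp only [conjReflect, finsetSum_coeff, coeff_C_mul_X_pow, coeff_reflect, coeff_map,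
    Finset.sum_ite_eq, Finset.mem_range]
  by_cases hk : k ≤ n
  · rw [if_pos (by omega), revAt_le hk]
  · rw [if_neg (by omega), revAt_eq_self_of_lt (by omega),
      coeff_eq_zero_of_natDegree_lt (by omega), map_zero]

lemma eval_map_conj (P : ℂ[X]) (x : ℂ) :
    (P.map (starRingEnd ℂ)).eval x = conj (P.eval (conj x)) := by
  rw [eval_map, ← eval₂_hom, Complex.conj_conj]

lemma eval_conjReflect {n : ℕ} {P : ℂ[X]} (hP : P.natDegree ≤ n) {z : ℂ} (hz : z ≠ 0) :
    (conjReflect n P).eval z = z ^ n * conj (P.eval (conj z)⁻¹) := by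
  let := invertibleOfNonzero (inv_ne_zero hz)
  have h := eval₂_reflect_mul_pow (RingHom.id ℂ) z⁻¹ n (P.map (starRingEnd ℂ))
    (by rwa [natDegree_map])
  rw [invOf_eq_inv, inv_inv, ← eval, ← eval, eval_map_conj, map_inv₀, inv_pow,
    ← conjReflect_eq_reflect_map hP] at h
  rw [← h]
  field_simp

lemma normSq_one_sub_conj_mul_sub_normSq_sub (z r : ℂ) :
    Complex.normSq (1 - conj z * r) - Complex.normSq (z - r)
      = (Complex.normSq z - 1) * (Complex.normSq r - 1) := by
  simp only [Complex.normSq_apply, Complex.sub_re, Complex.sub_im, Complex.mul_re,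
    Complex.mul_im, Complex.conj_re, Complex.conj_im, Complex.one_re, Complex.one_im]
  ring

lemma norm_sub_le_norm_mul_norm_conj_inv_sub {z r : ℂ} (hz : 1 ≤ ‖z‖) (hr : 1 ≤ ‖r‖) :
    ‖z - r‖ ≤ ‖z‖ * ‖(conj z)⁻¹ - r‖ := by
  have hz0 : conj z ≠ 0 := by simpa [← norm_pos_iff] using hz.trans_lt' one_pos
  have hz2 : 1 ≤ Complex.normSq z := by rw [Complex.normSq_eq_norm_sq]; nlinarith
  have hr2 : 1 ≤ Complex.normSq r := by rw [Complex.normSq_eq_norm_sq]; nlinarith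
  rw [← Complex.norm_conj z, ← norm_mul, mul_sub, mul_inv_cancel₀ hz0,
    ← sq_le_sq₀ (by positivity) (by positivity), Complex.sq_norm, Complex.sq_norm]
  nlinarith [normSq_one_sub_conj_mul_sub_normSq_sub z r]

lemma norm_prod_sub_le_pow_mul_norm_prod_conj_inv_sub {s : Multiset ℂ} (hs : ∀ r ∈ s, 1 ≤ ‖r‖)
    {z : ℂ} (hz : 1 ≤ ‖z‖) :
    ‖(s.map (z - ·)).prod‖ ≤ ‖z‖ ^ Multiset.card s * ‖(s.map ((conj z)⁻¹ - ·)).prod‖ := by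
  induction s using Multiset.induction_on with
  | empty => simp
  | cons a s ih =>
    simp only [Multiset.forall_mem_cons] at hs
    simp only [Multiset.map_cons, Multiset.prod_cons, Multiset.card_cons, norm_mul, pow_succ]
    calc ‖z - a‖ * ‖(s.map (z - ·)).prod‖
        ≤ (‖z‖ * ‖(conj z)⁻¹ - a‖) *
            (‖z‖ ^ Multiset.card s * ‖(s.map ((conj z)⁻¹ - ·)).prod‖) :=
          mul_le_mul (norm_sub_le_norm_mul_norm_conj_inv_sub hz hs.1) (ih hs.2) (norm_nonneg _)
            (by positivity)
      _ = _ := by ring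

lemma norm_eval_le_norm_pow_mul_norm_eval_conj_inv {P : ℂ[X]} (hP : ∀ r ∈ P.roots, 1 ≤ ‖r‖)
    {z : ℂ} (hz : 1 ≤ ‖z‖) :
    ‖P.eval z‖ ≤ ‖z‖ ^ P.natDegree * ‖P.eval (conj z)⁻¹‖ := by
  have hsplit := IsAlgClosed.splits P
  rw [hsplit.eval_eq_prod_roots, hsplit.eval_eq_prod_roots, ← splits_iff_card_roots.mp hsplit,
    norm_mul, norm_mul, mul_left_comm]
  exact mul_le_mul_of_nonneg_left (norm_prod_sub_le_pow_mul_norm_prod_conj_inv_sub hP hz)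
    (norm_nonneg _)

theorem zeros_of_P_sub_gamma_conjReflect_general
    (n : ℕ)
    (P : Polynomial ℂ) (hP : P.natDegree = n)
    (hP0 : ∀ z : ℂ, ‖z‖ < 1 → P.eval z ≠ 0) :
    ∀ γ : ℂ, 1 < ‖γ‖ →
      ∀ z : ℂ, (P - Polynomial.C γ * conjReflect n P).eval z = 0 → ‖z‖ ≤ 1 := by
  intro γ hγ z hz
  by_contra! hz1
  have hroots : ∀ r ∈ P.roots, 1 ≤ ‖r‖ := fun r hr =>
    not_lt.mp fun h => hP0 r h (mem_roots'.mp hr).2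
  have hw : ‖(conj z)⁻¹‖ < 1 := by
    rwa [norm_inv, Complex.norm_conj, inv_lt_one₀ (one_pos.trans hz1)]
  have hPz : ‖P.eval z‖ = ‖γ‖ * (‖z‖ ^ n * ‖P.eval (conj z)⁻¹‖) := by
    rw [eval_sub, eval_mul, eval_C, sub_eq_zero] at hz
    rw [hz, eval_conjReflect hP.le (norm_pos_iff.mp (one_pos.trans hz1)), norm_mul, norm_mul,
      norm_pow, Complex.norm_conj]
  have hkey := norm_eval_le_norm_pow_mul_norm_eval_conj_inv hroots hz1.le
  rw [hP, hPz] at hkey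
  have hPw : 0 < ‖P.eval (conj z)⁻¹‖ := norm_pos_iff.mpr (hP0 _ hw)
  exact hkey.not_gt (lt_mul_left (by positivity) hγ)

theorem zeros_of_P_sub_gamma_conjReflect
    (n : ℕ) (hn : 1 ≤ n)
    (P : Polynomial ℂ) (hP : P.natDegree = n)
    (hP0 : ∀ z : ℂ, ‖z‖ < 1 → P.eval z ≠ 0) :
    ∀ γ : ℂ, 1 < ‖γ‖ →
      ∀ z : ℂ, (P - Polynomial.C γ * conjReflect n P).eval z = 0 → ‖z‖ ≤ 1 :=
  zeros_of_P_sub_gamma_conjReflect_general n P hP hP0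
end
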